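/- For the HREM with σ > 0, the quenched free energy is uniformly bounded above: f_{k+1} ≤ (β²/2)·1/(2^σ - 1) + E[log Σ_{S=±1} exp(-β ε_0[S])] for all k. -/

import Mathlib

/-!
Splitting a configuration into its two halves factors the partition function of a block at level
`n + 1` as `Z_{n+1} = Z_n¹ Z_n² R`, where `R = ∑_S p_S exp (-β c ε_{n+1}[S])`,
`c = 2^{(n+1)(1-σ)/2}`, averages the fresh level-`(n+1)` energies against the Gibbs weights `p_S`
of the two half-systems. The weights are functions of the energies of levels `≤ n` only, hence
independent of the fresh ones, so `E R = exp (β² c² / 2)`, and Jensen's inequality for `log` gives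
`E log Z_{n+1} ≤ E log Z_n¹ + E log Z_n² + β² c² / 2`. Since `c² = 2^{n+1} 2^{-(n+1)σ}`, iterating
down to level `0` (where all blocks have the same law) and dividing by `2^{k+1}` leaves at most
`(β²/2) ∑_{i ≥ 1} 2^{-iσ} = (β²/2) / (2^σ - 1)` on top of the level-`0` term.
-/

open MeasureTheory ProbabilityTheory Real Filter

/-- A configuration of `2 ^ n` Ising spins (each spin is a Boolean). -/
abbrev Cfg (n : ℕ) : Type := Fin (2 ^ n) → Bool

/-- The left half of a spin configuration. -/
def blkL {n : ℕ} (S : Cfg (n + 1)) : Cfg n :=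
  fun i => S ⟨i.1, lt_of_lt_of_le i.2 (Nat.pow_le_pow_right (by norm_num) (Nat.le_succ n))⟩

/-- The right half of a spin configuration. -/
def blkR {n : ℕ} (S : Cfg (n + 1)) : Cfg n :=
  fun i => S ⟨2 ^ n + i.1, by have := i.2; rw [pow_succ]; omega⟩

variable {Ω : Type} [MeasurableSpace Ω]

/-- The Hamiltonian of the hierarchical random energy model (HREM), defined recursively:
`H_{n+1}[S] = H_n¹[S₁] + H_n²[S₂] + 2^{(n+1)(1-σ)/2} ε_{n+1}[S]`, `H_0[S] = ε_0[S]`,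
where the second argument indexes the hierarchical block (the two sub-blocks of block `j`
are `2j` and `2j+1`), so that the two half-Hamiltonians use disjoint (hence independent)
families of random energies. -/
noncomputable def hremH (σ : ℝ) (ε : ∀ l : ℕ, ℕ → Cfg l → Ω → ℝ) :
    ∀ n : ℕ, ℕ → Cfg n → Ω → ℝ
  | 0 => fun j S => ε 0 j S
  | (n + 1) => fun j S ω =>
      hremH σ ε n (2 * j) (blkL S) ω + hremH σ ε n (2 * j + 1) (blkR S) ω
        + (2 : ℝ) ^ (((n : ℝ) + 1) * (1 - σ) / 2) * ε (n + 1) j S ω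

/-- The partition function `Z_n = ∑_S exp (-β H_n[S])` of the HREM. -/
noncomputable def hremZ (σ : ℝ) (ε : ∀ l : ℕ, ℕ → Cfg l → Ω → ℝ) (β : ℝ) (n : ℕ)
    (ω : Ω) : ℝ :=
  ∑ S : Cfg n, Real.exp (-β * hremH σ ε n 0 S ω)

/-- The quenched free energy `f_n = 2^{-n} E[log Z_n]` of the HREM. -/
noncomputable def hremF (σ : ℝ) (ε : ∀ l : ℕ, ℕ → Cfg l → Ω → ℝ) (μ : Measure Ω)
    (β : ℝ) (n : ℕ) : ℝ :=
  ((2 : ℝ) ^ n)⁻¹ * ∫ ω, Real.log (hremZ σ ε β n ω) ∂μ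

section General

variable {α : Type*} [MeasurableSpace α] {μ : Measure α}

theorem integral_log_le_log_integral [IsProbabilityMeasure μ] {R : α → ℝ} (hR : ∀ x, 0 < R x)
    (hRi : Integrable R μ) (hlogR : Integrable (fun x => log (R x)) μ) :
    ∫ x, log (R x) ∂μ ≤ log (∫ x, R x ∂μ) := by
  set m := ∫ x, R x ∂μ
  have hm : 0 < m := integral_pos_iff_support_of_nonneg (fun x => (hR x).le) hRi |>.2 <| by
    simp [Function.support_eq_univ fun x => (hR x).ne']
  -- `log t ≤ log m + t / m - 1` is the tangent line of the concave `log` at `m`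
  have htangent : ∀ x, log (R x) ≤ log m + (R x / m - 1) := fun x => by
    have := log_le_sub_one_of_pos (div_pos (hR x) hm)
    rw [log_div (hR x).ne' hm.ne'] at this
    linarith
  have hdiv : Integrable (fun x => R x / m - 1) μ := (hRi.div_const m).sub (integrable_const 1)
  calc ∫ x, log (R x) ∂μ ≤ ∫ x, (log m + (R x / m - 1)) ∂μ :=
        integral_mono hlogR ((integrable_const _).add hdiv) htangent
    _ = log m := by
        rw [integral_add (integrable_const _) hdiv,
          integral_sub (hRi.div_const m) (integrable_const 1), integral_div, div_self hm.ne']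
        simp

theorem integral_log_mul_le [IsProbabilityMeasure μ] {W R : α → ℝ} (hW : ∀ x, 0 < W x)
    (hR : ∀ x, 0 < R x) (hRi : Integrable R μ) (hlogW : Integrable (fun x => log (W x)) μ)
    (hlogWR : Integrable (fun x => log (W x * R x)) μ) :
    ∫ x, log (W x * R x) ∂μ ≤ ∫ x, log (W x) ∂μ + log (∫ x, R x ∂μ) := by
  have hlog : ∀ x, log (W x * R x) = log (W x) + log (R x) := fun x =>
    log_mul (hW x).ne' (hR x).ne'
  have hlogR : Integrable (fun x => log (R x)) μ :=
    (hlogWR.sub hlogW).congr (ae_of_all _ fun x => by simp only [Pi.sub_apply, hlog]; ring)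
  simp_rw [hlog]
  rw [integral_add hlogW hlogR]
  gcongr
  exact integral_log_le_log_integral hR hRi hlogR

theorem abs_log_sum_exp_le {κ : Type*} [Fintype κ] [Nonempty κ] (y : κ → ℝ) :
    |log (∑ i, exp (y i))| ≤ ∑ i, |y i| + log (Fintype.card κ) := by
  obtain ⟨i₀⟩ := ‹Nonempty κ›
  have hpos : 0 < ∑ i, exp (y i) := Finset.sum_pos (fun i _ => exp_pos _) Finset.univ_nonempty
  have hcard : (0 : ℝ) < Fintype.card κ := by exact_mod_cast Fintype.card_pos
  have habs : ∀ i, |y i| ≤ ∑ i, |y i| := fun i =>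
    Finset.single_le_sum (f := fun i => |y i|) (fun i _ => abs_nonneg _) (Finset.mem_univ i)
  have hlower : y i₀ ≤ log (∑ i, exp (y i)) := (le_log_iff_exp_le hpos).2 <|
    Finset.single_le_sum (f := fun i => exp (y i)) (fun i _ => (exp_pos _).le) (Finset.mem_univ i₀)
  have hupper : log (∑ i, exp (y i)) ≤ log (Fintype.card κ) + ∑ i, |y i| := by
    rw [← log_exp (∑ i, |y i|), ← log_mul hcard.ne' (exp_pos _).ne']
    refine log_le_log hpos ?_
    calc ∑ i, exp (y i) ≤ ∑ _i : κ, exp (∑ i, |y i|) :=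
          Finset.sum_le_sum fun i _ => exp_le_exp.2 ((le_abs_self _).trans (habs i))
      _ = _ := by simp
  have hlog_card : 0 ≤ log (Fintype.card κ : ℝ) := log_nonneg (by exact_mod_cast Fintype.card_pos)
  rw [abs_le]
  constructor <;> linarith [neg_abs_le (y i₀), habs i₀]

theorem Integrable.log_sum_exp [IsFiniteMeasure μ] {κ : Type*} [Fintype κ] [Nonempty κ]
    {Y : κ → α → ℝ} (hY : ∀ i, Integrable (Y i) μ) :
    Integrable (fun x => log (∑ i, exp (Y i x))) μ := by
  have hbound : Integrable (fun x => ∑ i, |Y i x| + log (Fintype.card κ)) μ :=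
    (integrable_finsetSum _ fun i _ => (hY i).abs).add (integrable_const _)
  refine hbound.mono' ?_ (ae_of_all _ fun x => ?_)
  · exact (Finset.aemeasurable_fun_sum _ fun i _ =>
      (hY i).aemeasurable.exp).log.aestronglyMeasurable
  · simpa using abs_log_sum_exp_le fun i => Y i x

end General

section Mixture

variable {α : Type*} [MeasurableSpace α] {μ : Measure α} {κ : Type*} [Fintype κ]
  {p G : κ → α → ℝ}

theorem integrable_exp_mul_of_map_eq_gaussianReal [NeZero μ] {X : α → ℝ}
    (hX : μ.map X = gaussianReal 0 1) (t : ℝ) : Integrable (fun x => exp (t * X x)) μ := by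
  rw [← mgf_pos_iff, mgf_gaussianReal hX]
  exact exp_pos _

theorem integrable_of_nonneg_of_sum_eq_one [IsFiniteMeasure μ] (hp : ∀ i, Measurable (p i))
    (hp_nonneg : ∀ i x, 0 ≤ p i x) (hp_sum : ∀ x, ∑ i, p i x = 1) (i : κ) :
    Integrable (p i) μ :=
  Integrable.of_bound (hp i).aestronglyMeasurable 1 <| ae_of_all _ fun x => by
    rw [norm_of_nonneg (hp_nonneg i x), ← hp_sum x]
    exact Finset.single_le_sum (f := fun i => p i x) (fun i _ => hp_nonneg i x) (Finset.mem_univ i)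

theorem integrable_weight_mul_exp_gaussian [IsProbabilityMeasure μ] (hp : ∀ i, Measurable (p i))
    (hp_nonneg : ∀ i x, 0 ≤ p i x) (hp_sum : ∀ x, ∑ i, p i x = 1)
    (hG : ∀ i, μ.map (G i) = gaussianReal 0 1) (hind : ∀ i, IndepFun (p i) (G i) μ) (t : ℝ)
    (i : κ) : Integrable (fun x => p i x * exp (t * G i x)) μ :=
  ((hind i).comp measurable_id (measurable_const_mul t).exp).integrable_mul
    (integrable_of_nonneg_of_sum_eq_one hp hp_nonneg hp_sum i)
    (integrable_exp_mul_of_map_eq_gaussianReal (hG i) t)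

theorem integral_sum_weight_mul_exp_gaussian [IsProbabilityMeasure μ] (hp : ∀ i, Measurable (p i))
    (hp_nonneg : ∀ i x, 0 ≤ p i x) (hp_sum : ∀ x, ∑ i, p i x = 1)
    (hG : ∀ i, μ.map (G i) = gaussianReal 0 1) (hind : ∀ i, IndepFun (p i) (G i) μ) (t : ℝ) :
    ∫ x, ∑ i, p i x * exp (t * G i x) ∂μ = exp (t ^ 2 / 2) := by
  have hterm : ∀ i, ∫ x, p i x * exp (t * G i x) ∂μ = (∫ x, p i x ∂μ) * exp (t ^ 2 / 2) := by
    intro i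
    have := ((hind i).comp measurable_id (measurable_const_mul t).exp).integral_mul_eq_mul_integral
      (hp i).aestronglyMeasurable
      (integrable_exp_mul_of_map_eq_gaussianReal (hG i) t).aestronglyMeasurable
    simp only [Pi.mul_apply, Function.comp_apply, id] at this
    rw [this, ← mgf, mgf_gaussianReal (hG i)]
    norm_num
  rw [integral_finsetSum _ fun i _ =>
    integrable_weight_mul_exp_gaussian hp hp_nonneg hp_sum hG hind t i]
  simp_rw [hterm, ← Finset.sum_mul, ← integral_finsetSum _ fun i _ =>
    integrable_of_nonneg_of_sum_eq_one hp hp_nonneg hp_sum i, hp_sum]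
  simp

end Mixture

section Independence

variable {α : Type*} {ι : Type*} {β : ι → Type*} {mβ : ∀ i, MeasurableSpace (β i)}
  {f : ∀ i, α → β i}

theorem measurable_iSup_comap_of_mem {s : Set ι} {i : ι} (hi : i ∈ s) :
    Measurable[⨆ i ∈ s, (mβ i).comap (f i)] (f i) :=
  measurable_iff_comap_le.2 <| le_iSup₂ (f := fun i (_ : i ∈ s) => (mβ i).comap (f i)) i hi

theorem iIndepFun.indepFun_of_measurable_iSup [MeasurableSpace α] {μ : Measure α}
    (hind : iIndepFun f μ) (hf : ∀ i, Measurable (f i)) {s t : Set ι} (hst : Disjoint s t)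
    {γ δ : Type*} [MeasurableSpace γ] [MeasurableSpace δ]
    {A : α → γ} {B : α → δ} (hA : Measurable[⨆ i ∈ s, (mβ i).comap (f i)] A)
    (hB : Measurable[⨆ i ∈ t, (mβ i).comap (f i)] B) : IndepFun A B μ := by
  rw [IndepFun_iff_Indep]
  exact indep_of_indep_of_le_left
    (indep_of_indep_of_le_right (indep_iSup_of_disjoint (fun i => (hf i).comap_le) hind.iIndep hst)
      (measurable_iff_comap_le.1 hB))
    (measurable_iff_comap_le.1 hA)

end Independence

def cfgSplitEquiv (n : ℕ) : Cfg (n + 1) ≃ Cfg n × Cfg n :=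
  (((finCongr (by rw [pow_succ, mul_two])).trans finSumFinEquiv.symm).arrowCongr
    (Equiv.refl Bool)).trans (Equiv.sumArrowEquivProdArrow _ _ _)

theorem cfgSplitEquiv_apply {n : ℕ} (S : Cfg (n + 1)) : cfgSplitEquiv n S = (blkL S, blkR S) := by
  ext i <;> simp only [cfgSplitEquiv, blkL, blkR] <;> congr 1

theorem sum_blkL_mul_blkR {M : Type*} [CommSemiring M] (n : ℕ) (F G : Cfg n → M) :
    ∑ S : Cfg (n + 1), F (blkL S) * G (blkR S) = (∑ S, F S) * ∑ S, G S := by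
  rw [Finset.sum_mul_sum, ← Finset.sum_product', Finset.univ_product_univ]
  exact Fintype.sum_equiv (cfgSplitEquiv n) _ _ fun S => by rw [cfgSplitEquiv_apply]

-- `hremZ σ ε β n` is the block `j = 0`.
noncomputable def hremBlockZ (σ : ℝ) (ε : ∀ l : ℕ, ℕ → Cfg l → Ω → ℝ) (β : ℝ) (n j : ℕ)
    (ω : Ω) : ℝ :=
  ∑ S : Cfg n, exp (-β * hremH σ ε n j S ω)

noncomputable def hremSplitWeight (σ : ℝ) (ε : ∀ l : ℕ, ℕ → Cfg l → Ω → ℝ) (β : ℝ) (n j : ℕ)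
    (S : Cfg (n + 1)) (ω : Ω) : ℝ :=
  exp (-β * hremH σ ε n (2 * j) (blkL S) ω) * exp (-β * hremH σ ε n (2 * j + 1) (blkR S) ω)
    / (hremBlockZ σ ε β n (2 * j) ω * hremBlockZ σ ε β n (2 * j + 1) ω)

noncomputable def hremLevelFactor (σ : ℝ) (ε : ∀ l : ℕ, ℕ → Cfg l → Ω → ℝ) (β : ℝ) (n j : ℕ)
    (ω : Ω) : ℝ :=
  ∑ S, hremSplitWeight σ ε β n j S ω
    * exp (-β * (2 : ℝ) ^ (((n : ℝ) + 1) * (1 - σ) / 2) * ε (n + 1) j S ω)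

abbrev levelsIn (ε : ∀ l : ℕ, ℕ → Cfg l → Ω → ℝ) (s : Set ℕ) : MeasurableSpace Ω :=
  ⨆ q ∈ {q : Σ l : ℕ, ℕ × Cfg l | q.1 ∈ s},
    MeasurableSpace.comap (ε q.1 q.2.1 q.2.2) inferInstance

section Pointwise

variable {Ω : Type} {σ β : ℝ} {ε : ∀ l : ℕ, ℕ → Cfg l → Ω → ℝ}

theorem hremBlockZ_pos (n j : ℕ) (ω : Ω) : 0 < hremBlockZ σ ε β n j ω :=
  Finset.sum_pos (fun _ _ => exp_pos _) Finset.univ_nonempty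

theorem hremSplitWeight_nonneg (n j : ℕ) (S : Cfg (n + 1)) (ω : Ω) :
    0 ≤ hremSplitWeight σ ε β n j S ω :=
  div_nonneg (by positivity) (mul_pos (hremBlockZ_pos _ _ ω) (hremBlockZ_pos _ _ ω)).le

theorem sum_hremSplitWeight (n j : ℕ) (ω : Ω) : ∑ S, hremSplitWeight σ ε β n j S ω = 1 := by
  simp only [hremSplitWeight, ← Finset.sum_div]
  rw [sum_blkL_mul_blkR n (fun T => exp (-β * hremH σ ε n (2 * j) T ω))
    (fun T => exp (-β * hremH σ ε n (2 * j + 1) T ω))]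
  exact div_self (mul_pos (hremBlockZ_pos _ _ ω) (hremBlockZ_pos _ _ ω)).ne'

theorem hremBlockZ_succ (n j : ℕ) (ω : Ω) :
    hremBlockZ σ ε β (n + 1) j ω = hremBlockZ σ ε β n (2 * j) ω * hremBlockZ σ ε β n (2 * j + 1) ω
      * hremLevelFactor σ ε β n j ω := by
  simp only [hremLevelFactor, hremSplitWeight, Finset.mul_sum]
  refine Finset.sum_congr rfl fun S _ => ?_
  rw [div_mul_eq_mul_div,
    mul_div_cancel₀ _ (mul_pos (hremBlockZ_pos _ _ ω) (hremBlockZ_pos _ _ ω)).ne',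
    ← exp_add, ← exp_add, hremH]
  ring_nf

variable {m : MeasurableSpace Ω} {n : ℕ}

theorem measurable_hremH_of_le (hε : ∀ l ≤ n, ∀ j S, Measurable[m] (ε l j S)) {k : ℕ}
    (hk : k ≤ n) (j : ℕ) (S : Cfg k) : Measurable[m] (hremH σ ε k j S) := by
  induction k generalizing j with
  | zero => exact hε 0 hk j S
  | succ k ih =>
    exact ((ih (by omega) _ _).add (ih (by omega) _ _)).add ((hε _ hk j S).const_mul _)

theorem measurable_hremSplitWeight (hε : ∀ l ≤ n, ∀ j S, Measurable[m] (ε l j S)) (j : ℕ)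
    (S : Cfg (n + 1)) : Measurable[m] (hremSplitWeight σ ε β n j S) := by
  have hH := measurable_hremH_of_le (σ := σ) hε le_rfl
  unfold hremSplitWeight hremBlockZ
  fun_prop

end Pointwise

section Probability

variable {σ β : ℝ} {μ : Measure Ω} {ε : ∀ l : ℕ, ℕ → Cfg l → Ω → ℝ}

theorem integrable_hremH (hgauss : ∀ l j c, μ.map (ε l j c) = gaussianReal 0 1) (n j : ℕ)
    (S : Cfg n) : Integrable (hremH σ ε n j S) μ := by
  have hε : ∀ l j (S : Cfg l), Integrable (ε l j S) μ := fun l j S =>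
    HasGaussianLaw.integrable ⟨by rw [hgauss]; infer_instance⟩
  induction n generalizing j with
  | zero => exact hε 0 j S
  | succ n ih => exact ((ih _ _).add (ih _ _)).add ((hε _ j S).const_mul _)

theorem integrable_log_hremBlockZ [IsFiniteMeasure μ]
    (hgauss : ∀ l j c, μ.map (ε l j c) = gaussianReal 0 1) (n j : ℕ) :
    Integrable (fun ω => log (hremBlockZ σ ε β n j ω)) μ :=
  Integrable.log_sum_exp fun S => (integrable_hremH hgauss n j S).const_mul (-β)

theorem map_eps_eq_pi (hmeas : ∀ l j c, Measurable (ε l j c))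
    (hgauss : ∀ l j c, μ.map (ε l j c) = gaussianReal 0 1)
    (hindep : iIndepFun (fun q : Σ l : ℕ, ℕ × Cfg l => ε q.1 q.2.1 q.2.2) μ) (l j : ℕ) :
    μ.map (fun ω S => ε l j S ω) = Measure.pi fun _ : Cfg l => gaussianReal 0 1 := by
  have hinj : Function.Injective fun S : Cfg l => (⟨l, j, S⟩ : Σ l : ℕ, ℕ × Cfg l) :=
    fun S T h => by simpa using h
  rw [(hindep.precomp hinj).map_fun_eq_pi_map fun S => (hmeas l j S).aemeasurable]
  simp only [hgauss]

theorem integral_log_hremBlockZ_zero (hmeas : ∀ l j c, Measurable (ε l j c))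
    (hgauss : ∀ l j c, μ.map (ε l j c) = gaussianReal 0 1)
    (hindep : iIndepFun (fun q : Σ l : ℕ, ℕ × Cfg l => ε q.1 q.2.1 q.2.2) μ) (j : ℕ) :
    ∫ ω, log (hremBlockZ σ ε β 0 j ω) ∂μ = ∫ ω, log (hremBlockZ σ ε β 0 0 ω) ∂μ := by
  have hlaw : ∀ j, ∫ ω, log (hremBlockZ σ ε β 0 j ω) ∂μ
      = ∫ x, log (∑ S : Cfg 0, exp (-β * x S)) ∂(Measure.pi fun _ => gaussianReal 0 1) := by
    intro j
    rw [← map_eps_eq_pi hmeas hgauss hindep 0 j, integral_map (by fun_prop)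
      (Finset.measurable_sum _ fun S _ => by fun_prop).log.aestronglyMeasurable]
    rfl
  rw [hlaw, hlaw]

theorem indepFun_hremSplitWeight (hmeas : ∀ l j c, Measurable (ε l j c))
    (hindep : iIndepFun (fun q : Σ l : ℕ, ℕ × Cfg l => ε q.1 q.2.1 q.2.2) μ) (n j : ℕ)
    (S : Cfg (n + 1)) : IndepFun (hremSplitWeight σ ε β n j S) (ε (n + 1) j S) μ := by
  have hε : ∀ s, ∀ l ∈ s, ∀ j (S : Cfg l), Measurable[levelsIn ε s] (ε l j S) :=
    fun _ l hl j S => measurable_iSup_comap_of_mem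
      (f := fun q : Σ l : ℕ, ℕ × Cfg l => ε q.1 q.2.1 q.2.2) (i := ⟨l, j, S⟩) hl
  refine iIndepFun.indepFun_of_measurable_iSup hindep (fun q => hmeas _ _ _)
    (s := {q | q.1 ∈ Set.Iic n}) (t := {q | q.1 ∈ Set.Ioi n}) ?_
    (measurable_hremSplitWeight (fun l hl => hε _ l hl) j S)
    (hε _ _ (Set.mem_Ioi.2 n.lt_succ_self) j S)
  exact Set.disjoint_left.2 fun q (h₁ : q.1 ≤ n) (h₂ : n < q.1) => h₁.not_gt h₂

theorem integrable_hremLevelFactor [IsProbabilityMeasure μ]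
    (hmeas : ∀ l j c, Measurable (ε l j c))
    (hgauss : ∀ l j c, μ.map (ε l j c) = gaussianReal 0 1)
    (hindep : iIndepFun (fun q : Σ l : ℕ, ℕ × Cfg l => ε q.1 q.2.1 q.2.2) μ) (n j : ℕ) :
    Integrable (hremLevelFactor σ ε β n j) μ :=
  integrable_finsetSum _ fun S _ => integrable_weight_mul_exp_gaussian
    (measurable_hremSplitWeight (fun l _ j S => hmeas l j S) j) (hremSplitWeight_nonneg n j)
    (sum_hremSplitWeight n j) (fun S => hgauss _ _ S) (indepFun_hremSplitWeight hmeas hindep n j) _ S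

theorem integral_hremLevelFactor [IsProbabilityMeasure μ]
    (hmeas : ∀ l j c, Measurable (ε l j c))
    (hgauss : ∀ l j c, μ.map (ε l j c) = gaussianReal 0 1)
    (hindep : iIndepFun (fun q : Σ l : ℕ, ℕ × Cfg l => ε q.1 q.2.1 q.2.2) μ) (n j : ℕ) :
    ∫ ω, hremLevelFactor σ ε β n j ω ∂μ
      = exp ((β * (2 : ℝ) ^ (((n : ℝ) + 1) * (1 - σ) / 2)) ^ 2 / 2) := by
  simp only [hremLevelFactor]
  rw [integral_sum_weight_mul_exp_gaussian
    (measurable_hremSplitWeight (fun l _ j S => hmeas l j S) j) (hremSplitWeight_nonneg n j)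
    (sum_hremSplitWeight n j) (fun S => hgauss _ _ S) (indepFun_hremSplitWeight hmeas hindep n j)]
  ring_nf

theorem integral_log_hremBlockZ_succ_le [IsProbabilityMeasure μ]
    (hmeas : ∀ l j c, Measurable (ε l j c))
    (hgauss : ∀ l j c, μ.map (ε l j c) = gaussianReal 0 1)
    (hindep : iIndepFun (fun q : Σ l : ℕ, ℕ × Cfg l => ε q.1 q.2.1 q.2.2) μ) (n j : ℕ) :
    ∫ ω, log (hremBlockZ σ ε β (n + 1) j ω) ∂μ ≤
      ∫ ω, log (hremBlockZ σ ε β n (2 * j) ω) ∂μ + ∫ ω, log (hremBlockZ σ ε β n (2 * j + 1) ω) ∂μ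
        + (β * (2 : ℝ) ^ (((n : ℝ) + 1) * (1 - σ) / 2)) ^ 2 / 2 := by
  have hZ := hremBlockZ_pos (σ := σ) (ε := ε) (β := β)
  have hW : ∀ ω, 0 < hremBlockZ σ ε β n (2 * j) ω * hremBlockZ σ ε β n (2 * j + 1) ω :=
    fun ω => mul_pos (hZ _ _ ω) (hZ _ _ ω)
  have hR : ∀ ω, 0 < hremLevelFactor σ ε β n j ω := fun ω =>
    pos_of_mul_pos_right (hremBlockZ_succ n j ω ▸ hZ _ _ ω) (hW ω).le
  have hlogZ := fun k i => integrable_log_hremBlockZ (σ := σ) (β := β) hgauss k i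
  have hlogW : Integrable (fun ω => log (hremBlockZ σ ε β n (2 * j) ω
      * hremBlockZ σ ε β n (2 * j + 1) ω)) μ :=
    ((hlogZ _ _).add (hlogZ _ _)).congr
      (ae_of_all _ fun ω => (log_mul (hZ _ _ ω).ne' (hZ _ _ ω).ne').symm)
  calc ∫ ω, log (hremBlockZ σ ε β (n + 1) j ω) ∂μ
      ≤ ∫ ω, log (hremBlockZ σ ε β n (2 * j) ω * hremBlockZ σ ε β n (2 * j + 1) ω) ∂μ
          + log (∫ ω, hremLevelFactor σ ε β n j ω ∂μ) := by
        simp_rw [hremBlockZ_succ]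
        refine integral_log_mul_le hW hR (integrable_hremLevelFactor hmeas hgauss hindep n j)
          hlogW ?_
        simpa only [hremBlockZ_succ] using hlogZ (n + 1) j
    _ = _ := by
        simp_rw [log_mul (hZ _ _ _).ne' (hZ _ _ _).ne']
        rw [integral_hremLevelFactor hmeas hgauss hindep, log_exp,
          integral_add (hlogZ _ _) (hlogZ _ _)]

theorem hremCoeff_sq (σ : ℝ) (n : ℕ) :
    ((2 : ℝ) ^ (((n : ℝ) + 1) * (1 - σ) / 2)) ^ 2 = 2 ^ (n + 1) * ((2 : ℝ) ^ (-σ)) ^ (n + 1) := by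
  rw [← rpow_natCast _ 2, ← rpow_mul zero_le_two, ← rpow_natCast (2 ^ (-σ)) (n + 1),
    ← rpow_mul zero_le_two, ← rpow_natCast 2 (n + 1), ← rpow_add zero_lt_two]
  push_cast
  ring_nf

theorem integral_log_hremBlockZ_le [IsProbabilityMeasure μ]
    (hmeas : ∀ l j c, Measurable (ε l j c))
    (hgauss : ∀ l j c, μ.map (ε l j c) = gaussianReal 0 1)
    (hindep : iIndepFun (fun q : Σ l : ℕ, ℕ × Cfg l => ε q.1 q.2.1 q.2.2) μ) (n j : ℕ) :
    ∫ ω, log (hremBlockZ σ ε β n j ω) ∂μ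
      ≤ 2 ^ n * (β ^ 2 / 2 * ∑ i ∈ Finset.Ico 1 (n + 1), ((2 : ℝ) ^ (-σ)) ^ i
        + ∫ ω, log (hremBlockZ σ ε β 0 0 ω) ∂μ) := by
  induction n generalizing j with
  | zero => simp [integral_log_hremBlockZ_zero hmeas hgauss hindep j]
  | succ n ih =>
    calc ∫ ω, log (hremBlockZ σ ε β (n + 1) j ω) ∂μ
        ≤ ∫ ω, log (hremBlockZ σ ε β n (2 * j) ω) ∂μ
          + ∫ ω, log (hremBlockZ σ ε β n (2 * j + 1) ω) ∂μ
          + (β * (2 : ℝ) ^ (((n : ℝ) + 1) * (1 - σ) / 2)) ^ 2 / 2 :=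
          integral_log_hremBlockZ_succ_le hmeas hgauss hindep n j
      _ ≤ 2 * (2 ^ n * (β ^ 2 / 2 * ∑ i ∈ Finset.Ico 1 (n + 1), ((2 : ℝ) ^ (-σ)) ^ i
            + ∫ ω, log (hremBlockZ σ ε β 0 0 ω) ∂μ))
          + β ^ 2 / 2 * (2 ^ (n + 1) * ((2 : ℝ) ^ (-σ)) ^ (n + 1)) := by
          rw [mul_pow, hremCoeff_sq]
          linarith [ih (2 * j), ih (2 * j + 1)]
      _ = _ := by
          rw [Finset.sum_Ico_succ_top (show 1 ≤ n + 1 by omega), pow_succ]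
          ring

theorem sum_Ico_two_rpow_neg_pow_le {σ : ℝ} (hσ : 0 < σ) (N : ℕ) :
    ∑ i ∈ Finset.Ico 1 N, ((2 : ℝ) ^ (-σ)) ^ i ≤ ((2 : ℝ) ^ σ - 1)⁻¹ := by
  have h2σ : 1 < (2 : ℝ) ^ σ := one_lt_rpow one_lt_two hσ
  refine (geom_sum_Ico_le_of_lt_one (rpow_nonneg zero_le_two _)
    (rpow_lt_one_of_one_lt_of_neg one_lt_two (neg_lt_zero.2 hσ))).trans_eq ?_
  rw [pow_one, rpow_neg zero_le_two]
  field_simp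

end Probability

theorem hremF_uniform_upper_bound_general
    (σ β : ℝ) (hσ : 0 < σ) (μ : Measure Ω) [IsProbabilityMeasure μ]
    (ε : ∀ l : ℕ, ℕ → Cfg l → Ω → ℝ)
    (hmeas : ∀ l j c, Measurable (ε l j c))
    (hgauss : ∀ l j c, μ.map (ε l j c) = gaussianReal 0 1)
    (hindep : iIndepFun
      (fun q : Σ l : ℕ, ℕ × Cfg l => ε q.1 q.2.1 q.2.2) μ) :
    ∀ k : ℕ, hremF σ ε μ β (k + 1)
      ≤ β ^ 2 / 2 * ((2 : ℝ) ^ σ - 1)⁻¹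
        + ∫ ω, Real.log (∑ S : Cfg 0, Real.exp (-β * ε 0 0 S ω)) ∂μ := by
  intro k
  calc hremF σ ε μ β (k + 1)
      ≤ β ^ 2 / 2 * ∑ i ∈ Finset.Ico 1 (k + 2), ((2 : ℝ) ^ (-σ)) ^ i
        + ∫ ω, log (hremBlockZ σ ε β 0 0 ω) ∂μ :=
        (inv_mul_le_iff₀ (by positivity)).2
          (integral_log_hremBlockZ_le hmeas hgauss hindep (k + 1) 0)
    _ ≤ _ := add_le_add
        (mul_le_mul_of_nonneg_left (sum_Ico_two_rpow_neg_pow_le hσ (k + 2)) (by positivity)) le_rfl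

/-- **Uniform upper bound for the HREM free energy.** For `σ > 0`,
`f_{k+1} ≤ (β²/2)/(2^σ - 1) + E[log Σ_{S=±1} exp(-β ε_0[S])]` for all `k`. -/
theorem hremF_uniform_upper_bound
    (σ β : ℝ) (hσ : 0 < σ) (hβ : 0 ≤ β) (μ : Measure Ω) [IsProbabilityMeasure μ]
    (ε : ∀ l : ℕ, ℕ → Cfg l → Ω → ℝ)
    (hmeas : ∀ l j c, Measurable (ε l j c))
    (hgauss : ∀ l j c, μ.map (ε l j c) = gaussianReal 0 1)
    (hindep : iIndepFun
      (fun q : Σ l : ℕ, ℕ × Cfg l => ε q.1 q.2.1 q.2.2) μ) :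
    ∀ k : ℕ, hremF σ ε μ β (k + 1)
      ≤ β ^ 2 / 2 * ((2 : ℝ) ^ σ - 1)⁻¹
        + ∫ ω, Real.log (∑ S : Cfg 0, Real.exp (-β * ε 0 0 S ω)) ∂μ :=
  hremF_uniform_upper_bound_general σ β hσ μ ε hmeas hgauss hindep
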